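/- Let K > (d-1)/2, M > d-1, b > 1, and let X = ∪_{n≥0} X_n where X_n is a maximal γb^{-n}-net on S^{d-1}. Define N_ξ = b^j for ξ ∈ X_j and ω_{ξ,η} = (min{N_ξ,N_η}/max{N_ξ,N_η})^{K+(d-1)/2} · (1 + min{N_ξ,N_η}·ρ(ξ,η))^{-M}. Then sup_{ξ∈X} ∑_{ζ∈X} ω_{ξ,ζ} ≤ c for a constant c depending only on d, γ, b, K, M. -/

import Mathlib

open MeasureTheory Real

/-- Geodesic distance on the unit sphere `S^{d-1}`: `ρ(x,y) = arccos (x·y)`. -/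
noncomputable def gdist {d : ℕ} (x y : Metric.sphere (0 : EuclideanSpace ℝ (Fin d)) 1) : ℝ :=
  Real.arccos (inner ℝ (x : EuclideanSpace ℝ (Fin d)) (y : EuclideanSpace ℝ (Fin d)))

/-- The surface (Lebesgue) measure on `S^{d-1}`, realized as the `(d-1)`-dimensional
Hausdorff measure. -/
noncomputable def smeasure (d : ℕ) :
    Measure (Metric.sphere (0 : EuclideanSpace ℝ (Fin d)) 1) :=
  Measure.hausdorffMeasure ((d : ℝ) - 1)

/-- The spherical cap (geodesic ball) `B(η,r)` on `S^{d-1}`. -/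
def sball {d : ℕ} (η : Metric.sphere (0 : EuclideanSpace ℝ (Fin d)) 1) (r : ℝ) :
    Set (Metric.sphere (0 : EuclideanSpace ℝ (Fin d)) 1) :=
  {x | gdist η x < r}

/-- `Z` is a maximal `δ`-net on `S^{d-1}`: a finite set with pairwise geodesic distances
`≥ δ` whose geodesic `δ`-balls cover the sphere. -/
def IsMaximalNet {d : ℕ} (δ : ℝ) (Z : Finset (Metric.sphere (0 : EuclideanSpace ℝ (Fin d)) 1)) : Prop :=
  (∀ ζ₁ ∈ Z, ∀ ζ₂ ∈ Z, ζ₁ ≠ ζ₂ → δ ≤ gdist ζ₁ ζ₂) ∧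
  (∀ x : Metric.sphere (0 : EuclideanSpace ℝ (Fin d)) 1, ∃ ζ ∈ Z, gdist ζ x < δ)

/-!
On a single scale, sort the `δ`-separated points `ζ` by the band `⌊ρ(ξ,ζ) / (δ/10)⌋ = t`.
Projecting onto `ξ^⊥` maps a band into an annulus of width `O(δ)` and radius `O((t+1)δ)` in
`ℝ^{d-1}` and keeps its points `δ/3`-separated, so a volume count leaves `O((t+1)^{d-2})` points
in it. Summing against `(1 + Lρ)^{-M}` with `M > d-1` gives
`∑_ζ (1 + L ρ(ξ,ζ))^{-M} ≲ (1 + 1/(Lδ))^{d-1}`.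
With `L = min(N_ξ,N_ζ)` and `δ = γ/N_ζ` this costs at most `(max/min)^{d-1}`, which the weight
`(min/max)^{K+(d-1)/2}` absorbs; what is left, `(min/max)^{K-(d-1)/2} = b^{-(K-(d-1)/2)|n-j|}`,
is a geometric series in `|n-j|` because `K > (d-1)/2`.
-/

open Finset Module Metric InnerProductGeometry

theorem sum_range_one_add_mul_rpow_neg_le {a μ : ℝ} (ha : 0 < a) (hμ : 1 < μ) (N : ℕ) :
    ∑ k ∈ range N, (1 + a * k) ^ (-μ) ≤ 1 + 1 / (a * (μ - 1)) := by
  set f : ℝ → ℝ := fun x => (1 + a * x) ^ (-μ)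
  have hf : AntitoneOn f (Set.Ici 0) := fun x hx y _ hxy =>
    rpow_le_rpow_of_nonpos (by have := Set.mem_Ici.mp hx; positivity) (by gcongr) (by linarith)
  have hint (T : ℝ) (hT : 0 ≤ T) : ∫ x in (0 : ℝ)..T, f x ≤ 1 / (a * (μ - 1)) := by
    have h0 : (0 : ℝ) ∉ Set.uIcc (1 + a * 0) (1 + a * T) := by
      rw [Set.uIcc_of_le (by gcongr)]; intro h; linarith [h.1]
    simp only [f]
    rw [intervalIntegral.integral_comp_add_mul (fun x => x ^ (-μ)) ha.ne' 1,
      integral_rpow (Or.inr ⟨by linarith, h0⟩), smul_eq_mul]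
    have hpos : 0 ≤ (1 + a * T) ^ (-(μ - 1)) := by positivity
    rw [mul_zero, add_zero, one_rpow, show -μ + 1 = -(μ - 1) by ring, div_neg, ← neg_div,
      inv_mul_eq_div, div_div, mul_comm (μ - 1)]
    gcongr
    linarith
  cases N with
  | zero => simp only [range_zero, sum_empty]; positivity
  | succ N =>
    have hsum := (hf.mono Set.Icc_subset_Ici_self).sum_le_integral (x₀ := 0) (a := N)
    have hN := hint N N.cast_nonneg
    simp only [zero_add, f] at hsum hN
    rw [sum_range_succ', Nat.cast_zero, mul_zero, add_zero, one_rpow]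
    push_cast at hsum ⊢
    linarith

theorem sum_range_pow_mul_rpow_neg_le {a M : ℝ} (ha : 0 < a) {p : ℕ} (hM : p + 1 < M) (N : ℕ) :
    ∑ t ∈ range N, ((t : ℝ) + 1) ^ p * (1 + a * t) ^ (-M)
      ≤ (1 + 1 / (M - p - 1)) * (1 + 1 / a) ^ (p + 1) := by
  have hterm (t : ℕ) : ((t : ℝ) + 1) ^ p * (1 + a * t) ^ (-M)
      ≤ (1 + 1 / a) ^ p * (1 + a * t) ^ (-(M - p)) := by
    have ht : (0 : ℝ) < 1 + a * t := by positivity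
    have hle : (t : ℝ) + 1 ≤ (1 + 1 / a) * (1 + a * t) := by
      have : (1 + 1 / a) * (1 + a * t) = (t + 1) + (a * t + 1 / a) := by field_simp; ring
      rw [this]; linarith [show 0 ≤ a * t + 1 / a by positivity]
    calc ((t : ℝ) + 1) ^ p * (1 + a * t) ^ (-M)
        ≤ ((1 + 1 / a) * (1 + a * t)) ^ p * (1 + a * t) ^ (-M) := by gcongr
      _ = (1 + 1 / a) ^ p * (1 + a * t) ^ (-(M - p)) := by
        rw [mul_pow, mul_assoc, ← rpow_natCast (1 + a * t), ← rpow_add ht, neg_sub,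
          sub_eq_add_neg, add_comm]
  have hc : 0 < M - p - 1 := by linarith
  calc ∑ t ∈ range N, ((t : ℝ) + 1) ^ p * (1 + a * t) ^ (-M)
      ≤ (1 + 1 / a) ^ p * ∑ t ∈ range N, (1 + a * t) ^ (-(M - p)) := by
        rw [mul_sum]; exact sum_le_sum fun t _ => hterm t
    _ ≤ (1 + 1 / a) ^ p * (1 + 1 / (a * (M - p - 1))) := by
        gcongr
        exact sum_range_one_add_mul_rpow_neg_le ha (by linarith) N
    _ ≤ (1 + 1 / a) ^ p * ((1 + 1 / a) * (1 + 1 / (M - p - 1))) := by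
        gcongr
        have : (1 + 1 / a) * (1 + 1 / (M - p - 1))
            = 1 + 1 / (a * (M - p - 1)) + (1 / a + 1 / (M - p - 1)) := by field_simp; ring
        rw [this]; linarith [show 0 ≤ 1 / a + 1 / (M - p - 1) by positivity]
    _ = (1 + 1 / (M - p - 1)) * (1 + 1 / a) ^ (p + 1) := by ring

theorem rpow_mul_one_add_inv_pow_le {r γ : ℝ} (hr0 : 0 < r) (hr1 : r ≤ 1) (hγ : 0 < γ) (α : ℝ)
    (p : ℕ) : r ^ α * (1 + 1 / (γ * r)) ^ p ≤ (1 + 1 / γ) ^ p * r ^ (α - p) := by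
  have hle : 1 + 1 / (γ * r) ≤ (1 + 1 / γ) * r⁻¹ := by
    rw [add_mul, one_mul, one_div_mul_eq_div, div_eq_mul_inv, div_eq_mul_inv, mul_inv]
    linarith [one_le_inv₀ hr0 |>.2 hr1]
  calc r ^ α * (1 + 1 / (γ * r)) ^ p ≤ r ^ α * ((1 + 1 / γ) * r⁻¹) ^ p := by gcongr
    _ = (1 + 1 / γ) ^ p * r ^ (α - p) := by
      rw [mul_pow, rpow_sub hr0, rpow_natCast, inv_pow, div_eq_mul_inv]
      ring

theorem min_pow_div_max_pow_rpow {b : ℝ} (hb : 1 ≤ b) (β : ℝ) (j n : ℕ) :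
    (min (b ^ j) (b ^ n) / max (b ^ j) (b ^ n)) ^ β = ((b ^ β)⁻¹) ^ (max j n - min j n) := by
  have hb0 : 0 < b := by linarith
  have hmono : Monotone (b ^ · : ℕ → ℝ) := pow_right_mono₀ hb
  rw [← hmono.map_min, ← hmono.map_max, ← inv_div, div_eq_mul_inv,
    ← pow_sub₀ _ hb0.ne' min_le_max, inv_rpow (by positivity), ← rpow_natCast,
    ← rpow_mul hb0.le, mul_comm, rpow_mul hb0.le, rpow_natCast, inv_pow]

theorem summable_pow_dist_and_tsum_le {q : ℝ} (hq0 : 0 ≤ q) (hq1 : q < 1) (j : ℕ) :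
    Summable (fun n => q ^ (max j n - min j n)) ∧
      ∑' n, q ^ (max j n - min j n) ≤ 2 / (1 - q) := by
  have hshift : (fun i => q ^ (max j (i + j) - min j (i + j))) = fun i => q ^ i := by
    ext i; congr 1; omega
  have hs : Summable (fun n => q ^ (max j n - min j n)) :=
    (summable_nat_add_iff j).1 (hshift ▸ summable_geometric_of_lt_one hq0 hq1)
  refine ⟨hs, ?_⟩
  have hhead : ∑ n ∈ range j, q ^ (max j n - min j n) ≤ 1 / (1 - q) := by
    calc ∑ n ∈ range j, q ^ (max j n - min j n) ≤ ∑ n ∈ range j, q ^ (j - 1 - n) := by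
          refine sum_le_sum fun n hn => pow_le_pow_of_le_one hq0 hq1.le ?_
          have := mem_range.mp hn; omega
      _ = ∑ n ∈ Ico 0 j, q ^ n := by rw [sum_range_reflect (fun n => q ^ n), range_eq_Ico]
      _ ≤ 1 / (1 - q) := by simpa using geom_sum_Ico_le_of_lt_one (m := 0) (n := j) hq0 hq1
  rw [← hs.sum_add_tsum_nat_add j, hshift, tsum_geometric_of_lt_one hq0 hq1]
  linarith [show 2 / (1 - q) = 1 / (1 - q) + (1 - q)⁻¹ by ring]

theorem sq_norm_eq_inner_sq_add_sq_norm_orthogonalProjectionOnto {E : Type*}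
    [NormedAddCommGroup E] [InnerProductSpace ℝ E] [CompleteSpace E] {v : E} (hv : ‖v‖ = 1)
    (x : E) :
    ‖x‖ ^ 2 = inner ℝ v x ^ 2 + ‖(ℝ ∙ v)ᗮ.orthogonalProjectionOnto x‖ ^ 2 := by
  rw [(ℝ ∙ v).norm_sq_eq_add_norm_sq_projection x]
  congr 1
  rw [Submodule.coe_norm, ← Submodule.starProjection_apply, Submodule.starProjection_singleton,
    hv, norm_smul, hv]
  simp

theorem card_mul_pow_add_pow_le_of_separated {E : Type*} [NormedAddCommGroup E]
    [NormedSpace ℝ E] [FiniteDimensional ℝ E] [Nontrivial E] {T : Finset E} {σ r₁ r₂ : ℝ}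
    (hσ : 0 < σ) (hsep : (T : Set E).Pairwise (σ ≤ dist · ·))
    (hT : ∀ x ∈ T, r₁ ≤ ‖x‖ ∧ ‖x‖ ≤ r₂) (hr₂ : 0 ≤ r₂) (hr : r₁ ≤ r₂) :
    #T * (σ / 2) ^ finrank ℝ E + max (r₁ - σ / 2) 0 ^ finrank ℝ E
      ≤ (r₂ + σ / 2) ^ finrank ℝ E := by
  borelize E
  set μ : Measure E := Measure.addHaar
  set r := σ / 2
  set s := max (r₁ - r) 0
  have hr0 : 0 < r := by positivity
  have hs : 0 ≤ s := le_max_right _ _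
  have hsR : s ≤ r₂ + r := max_le (by linarith) (by linarith)
  have hsub (x) (hx : x ∈ T) : ball x r ⊆ closedBall 0 (r₂ + r) \ ball 0 s := by
    intro p hp
    rw [mem_ball, dist_eq_norm] at hp
    have h₁ := norm_sub_norm_le p x
    have h₂ := norm_sub_norm_le x p
    rw [norm_sub_rev] at h₂
    refine ⟨by rw [mem_closedBall, dist_zero_right]; linarith [(hT x hx).2], fun hps => ?_⟩
    rw [mem_ball, dist_zero_right] at hps
    exact hps.not_ge (max_le (by linarith [(hT x hx).1]) (norm_nonneg p))
  have hdisj : (T : Set E).PairwiseDisjoint (ball · r) := fun x hx y hy hxy =>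
    ball_disjoint_ball ((add_halves σ).trans_le (hsep hx hy hxy))
  have hvol : μ (⋃ x ∈ T, ball x r) + μ (ball 0 s) ≤ μ (closedBall 0 (r₂ + r)) := by
    rw [← measure_union _ measurableSet_ball]
    · exact measure_mono (Set.union_subset
        (Set.iUnion₂_subset fun x hx => (hsub x hx).trans Set.sdiff_subset)
        (ball_subset_closedBall.trans (closedBall_subset_closedBall hsR)))
    · exact Set.disjoint_iUnion₂_left.2 fun x hx => Set.disjoint_left.2 fun p hp => (hsub x hx hp).2
  rw [measure_biUnion_finset hdisj fun _ _ => measurableSet_ball,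
    sum_congr rfl fun x _ => Measure.addHaar_ball μ x hr0.le, sum_const, nsmul_eq_mul,
    Measure.addHaar_ball μ _ hs, Measure.addHaar_closedBall μ _ (by linarith), ← mul_assoc,
    ← add_mul, ← ENNReal.ofReal_natCast, ← ENNReal.ofReal_mul (by positivity),
    ← ENNReal.ofReal_add (by positivity) (by positivity),
    ENNReal.mul_le_mul_iff_left (measure_ball_pos μ 0 one_pos).ne' measure_ball_lt_top.ne,
    ENNReal.ofReal_le_ofReal_iff (by positivity)] at hvol
  exact hvol

theorem card_mul_pow_le_of_separated {E : Type*} [NormedAddCommGroup E]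
    [NormedSpace ℝ E] [FiniteDimensional ℝ E] [Nontrivial E] {T : Finset E} {σ r₁ r₂ : ℝ}
    (hσ : 0 < σ) (hsep : (T : Set E).Pairwise (σ ≤ dist · ·))
    (hT : ∀ x ∈ T, r₁ ≤ ‖x‖ ∧ ‖x‖ ≤ r₂) (hr₂ : 0 ≤ r₂) (hr : r₁ ≤ r₂) :
    #T * (σ / 2) ^ finrank ℝ E
      ≤ (r₂ - r₁ + σ) * finrank ℝ E * (r₂ + σ / 2) ^ (finrank ℝ E - 1) := by
  have hvol := card_mul_pow_add_pow_le_of_separated hσ hsep hT hr₂ hr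
  have hs : 0 ≤ max (r₁ - σ / 2) 0 := le_max_right _ _
  have hsR : max (r₁ - σ / 2) 0 ≤ r₂ + σ / 2 := max_le (by linarith) (by linarith)
  have hpow := abs_pow_sub_pow_le (r₂ + σ / 2) (max (r₁ - σ / 2) 0) (finrank ℝ E)
  rw [abs_of_nonneg (sub_nonneg.2 (pow_le_pow_left₀ hs hsR _)), abs_of_nonneg (by linarith),
    abs_of_nonneg hs, abs_of_nonneg (by linarith), max_eq_left hsR] at hpow
  have hgap : r₂ + σ / 2 - max (r₁ - σ / 2) 0 ≤ r₂ - r₁ + σ := by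
    rcases le_total (r₁ - σ / 2) 0 with h | h
    · rw [max_eq_right h]; linarith
    · rw [max_eq_left h]; linarith
  calc #T * (σ / 2) ^ finrank ℝ E
      ≤ (r₂ + σ / 2) ^ finrank ℝ E - max (r₁ - σ / 2) 0 ^ finrank ℝ E := by linarith
    _ ≤ _ := hpow.trans (by gcongr)

section Sphere

local notation "𝔼" d:max => EuclideanSpace ℝ (Fin d)
local notation "𝕊" d:max => Metric.sphere (0 : EuclideanSpace ℝ (Fin d)) 1

variable {d : ℕ}

theorem gdist_eq_angle (x y : 𝕊 d) : gdist x y = angle (x : 𝔼 d) y := by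
  simp [gdist, angle, norm_eq_of_mem_sphere]

theorem cos_gdist (x y : 𝕊 d) : cos (gdist x y) = inner ℝ (x : 𝔼 d) y := by
  rw [gdist_eq_angle, cos_angle]
  simp [norm_eq_of_mem_sphere]

theorem gdist_nonneg (x y : 𝕊 d) : 0 ≤ gdist x y := arccos_nonneg _

theorem gdist_le_pi (x y : 𝕊 d) : gdist x y ≤ π := arccos_le_pi _

theorem four_div_pi_sq_mul_gdist_sq_le (x y : 𝕊 d) :
    4 / π ^ 2 * gdist x y ^ 2 ≤ ‖(x : 𝔼 d) - y‖ ^ 2 := by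
  have hcos := cos_le_one_sub_mul_cos_sq (abs_le.2 ⟨by linarith [gdist_nonneg x y, pi_pos],
    gdist_le_pi x y⟩)
  rw [norm_sub_sq_real, ← cos_gdist, norm_eq_of_mem_sphere, norm_eq_of_mem_sphere]
  linarith [show 4 / π ^ 2 * gdist x y ^ 2 = 2 * (2 / π ^ 2 * gdist x y ^ 2) by ring]

theorem norm_orthogonalProjectionOnto_eq_sin_gdist (ξ z : 𝕊 d) :
    ‖(ℝ ∙ (ξ : 𝔼 d))ᗮ.orthogonalProjectionOnto (z : 𝔼 d)‖ = sin (gdist ξ z) := by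
  have h := sq_norm_eq_inner_sq_add_sq_norm_orthogonalProjectionOnto
    (norm_eq_of_mem_sphere ξ) (z : 𝔼 d)
  rw [norm_eq_of_mem_sphere, ← cos_gdist] at h
  refine (pow_left_inj₀ (norm_nonneg _) (sin_nonneg_of_nonneg_of_le_pi (gdist_nonneg ξ z)
    (gdist_le_pi ξ z)) two_ne_zero).1 ?_
  rw [sin_sq]
  linarith

theorem sq_dist_orthogonalProjectionOnto (ξ z z' : 𝕊 d) :
    dist ((ℝ ∙ (ξ : 𝔼 d))ᗮ.orthogonalProjectionOnto (z : 𝔼 d))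
        ((ℝ ∙ (ξ : 𝔼 d))ᗮ.orthogonalProjectionOnto (z' : 𝔼 d)) ^ 2
      = ‖(z : 𝔼 d) - z'‖ ^ 2 - (cos (gdist ξ z) - cos (gdist ξ z')) ^ 2 := by
  rw [sq_norm_eq_inner_sq_add_sq_norm_orthogonalProjectionOnto (norm_eq_of_mem_sphere ξ),
    inner_sub_right, cos_gdist, cos_gdist, map_sub, dist_eq_norm, Submodule.coe_norm]
  ring

theorem le_dist_orthogonalProjectionOnto {δ : ℝ} (hδ : 0 ≤ δ) {ξ z z' : 𝕊 d}
    (hzz' : δ ≤ gdist z z') (hband : |gdist ξ z - gdist ξ z'| ≤ δ / 10) :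
    δ / 3 ≤ dist ((ℝ ∙ (ξ : 𝔼 d))ᗮ.orthogonalProjectionOnto (z : 𝔼 d))
        ((ℝ ∙ (ξ : 𝔼 d))ᗮ.orthogonalProjectionOnto (z' : 𝔼 d)) := by
  have hchord : δ ^ 2 / 4 ≤ ‖(z : 𝔼 d) - z'‖ ^ 2 := by
    have hπ : 1 / 4 ≤ 4 / π ^ 2 := by
      rw [div_le_div_iff₀ (by norm_num) (by positivity)]
      nlinarith [pi_pos, pi_le_four]
    calc δ ^ 2 / 4 ≤ 4 / π ^ 2 * gdist z z' ^ 2 := by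
          rw [div_eq_mul_one_div, mul_comm]; gcongr
      _ ≤ _ := four_div_pi_sq_mul_gdist_sq_le z z'
  have hcos : (cos (gdist ξ z) - cos (gdist ξ z')) ^ 2 ≤ (δ / 10) ^ 2 :=
    sq_le_sq' (abs_le.1 ((abs_cos_sub_cos_le _ _).trans hband)).1
      (abs_le.1 ((abs_cos_sub_cos_le _ _).trans hband)).2
  refine abs_le_of_sq_le_sq' ?_ dist_nonneg |>.2
  rw [sq_dist_orthogonalProjectionOnto]
  linarith [show (δ / 3) ^ 2 + (δ / 10) ^ 2 ≤ δ ^ 2 / 4 by nlinarith [sq_nonneg δ]]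

theorem card_le_of_separated_of_mem_band (hd : 2 ≤ d) (ξ : 𝕊 d) {δ t : ℝ} (hδ : 0 < δ)
    (ht : 0 ≤ t) {B : Finset (𝕊 d)} (hsep : (B : Set (𝕊 d)).Pairwise (δ ≤ gdist · ·))
    (hB : ∀ z ∈ B, t ≤ gdist ξ z ∧ gdist ξ z ≤ t + δ / 10) :
    (#B : ℝ) ≤ ((d - 1 : ℕ) : ℝ) * 6 ^ (d - 1) * (1 + t / δ) ^ (d - 2) := by
  rcases B.eq_empty_or_nonempty with rfl | ⟨z₀, hz₀⟩
  · simp only [card_empty, Nat.cast_zero]; positivity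
  have hsin : 0 ≤ sin t := sin_nonneg_of_nonneg_of_le_pi ht ((hB z₀ hz₀).1.trans (gdist_le_pi _ _))
  set P := (ℝ ∙ (ξ : 𝔼 d))ᗮ.orthogonalProjectionOnto
  have hrank : finrank ℝ (ℝ ∙ (ξ : 𝔼 d))ᗮ = d - 1 := by
    have := (ℝ ∙ (ξ : 𝔼 d)).finrank_add_finrank_orthogonal
    rw [finrank_span_singleton (ne_zero_of_mem_unit_sphere ξ), finrank_euclideanSpace_fin] at this
    omega
  have : Nontrivial (ℝ ∙ (ξ : 𝔼 d))ᗮ := Module.nontrivial_of_finrank_pos (by rw [hrank]; omega)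
  have hsepP : (B : Set (𝕊 d)).Pairwise fun z z' => δ / 3 ≤ dist (P z) (P z') :=
    fun z hz z' hz' hne => le_dist_orthogonalProjectionOnto hδ.le (hsep hz hz' hne)
      (abs_le.2 ⟨by linarith [hB z hz, hB z' hz'], by linarith [hB z hz, hB z' hz']⟩)
  have hinj : Set.InjOn (fun z : 𝕊 d => P z) B := fun z hz z' hz' heq => not_not.1 fun hne =>
    (hsepP hz hz' hne).not_gt (by rw [show P z = P z' from heq, dist_self]; positivity)
  have hnorm : ∀ x ∈ B.image (fun z : 𝕊 d => P z),
      sin t - δ / 10 ≤ ‖x‖ ∧ ‖x‖ ≤ sin t + δ / 10 := by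
    simp only [mem_image, forall_exists_index, and_imp, forall_apply_eq_imp_iff₂]
    intro z hz
    rw [norm_orthogonalProjectionOnto_eq_sin_gdist]
    have := (abs_sin_sub_sin_le (gdist ξ z) t).trans
      (abs_le.2 ⟨by linarith [hB z hz], by linarith [hB z hz]⟩ : |gdist ξ z - t| ≤ δ / 10)
    exact ⟨by linarith [(abs_le.1 this).1], by linarith [(abs_le.1 this).2]⟩
  have hpack := card_mul_pow_le_of_separated (by positivity : 0 < δ / 3)
    (by rwa [coe_image, hinj.pairwise_image]) hnorm (by linarith) (by linarith)
  rw [card_image_of_injOn hinj, hrank] at hpack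
  have hR : sin t + δ / 10 + δ / 3 / 2 ≤ (1 + t / δ) * δ := by
    rw [add_mul, one_mul, div_mul_cancel₀ t hδ.ne']
    linarith [sin_le ht]
  have hmain : (#B : ℝ) * (δ / 6) ^ (d - 1)
      ≤ (((d - 1 : ℕ) : ℝ) * 6 ^ (d - 1) * (1 + t / δ) ^ (d - 2)) * (δ / 6) ^ (d - 1) := by
    calc (#B : ℝ) * (δ / 6) ^ (d - 1)
        ≤ δ * ((d - 1 : ℕ) : ℝ) * ((1 + t / δ) * δ) ^ (d - 1 - 1) := by
          rw [show δ / 6 = δ / 3 / 2 by ring]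
          exact hpack.trans (by gcongr; linarith)
      _ = _ := by
        rw [show d - 1 - 1 = d - 2 by omega, div_pow, mul_pow,
          show d - 1 = d - 2 + 1 by omega, pow_succ, pow_succ]
        field_simp
  exact le_of_mul_le_mul_right hmain (by positivity)

theorem sum_filter_floor_eq_rpow_neg_le (hd : 2 ≤ d) {M δ L : ℝ} (hM : 0 ≤ M) (hδ : 0 < δ)
    (hL : 0 < L) {Z : Finset (𝕊 d)} (hZ : (Z : Set (𝕊 d)).Pairwise (δ ≤ gdist · ·)) (ξ : 𝕊 d)
    (t : ℕ) :
    ∑ ζ ∈ Z with ⌊gdist ξ ζ / (δ / 10)⌋₊ = t, (1 + L * gdist ξ ζ) ^ (-M)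
      ≤ ((d - 1 : ℕ) : ℝ) * 6 ^ (d - 1) * ((t + 1) ^ (d - 2) * (1 + L * (δ / 10) * t) ^ (-M)) := by
  have hh : 0 < δ / 10 := by positivity
  set F := {ζ ∈ Z | ⌊gdist ξ ζ / (δ / 10)⌋₊ = t}
  have hband : ∀ ζ ∈ F, t * (δ / 10) ≤ gdist ξ ζ ∧ gdist ξ ζ ≤ t * (δ / 10) + δ / 10 := by
    intro ζ hζ
    have hκ : ⌊gdist ξ ζ / (δ / 10)⌋₊ = t := (mem_filter.1 hζ).2
    have h₁ := Nat.floor_le (div_nonneg (gdist_nonneg ξ ζ) hh.le)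
    have h₂ := Nat.lt_floor_add_one (gdist ξ ζ / (δ / 10))
    rw [hκ, le_div_iff₀ hh] at h₁
    rw [hκ, div_lt_iff₀ hh, add_one_mul] at h₂
    exact ⟨h₁, h₂.le⟩
  have hcard := card_le_of_separated_of_mem_band hd ξ hδ (by positivity)
    (hZ.mono (coe_subset.2 (filter_subset _ _))) hband
  have hgrow : 1 + t * (δ / 10) / δ ≤ t + 1 := by
    rw [show (t : ℝ) * (δ / 10) / δ = t / 10 by field_simp]
    linarith [t.cast_nonneg (α := ℝ)]
  calc ∑ ζ ∈ F, (1 + L * gdist ξ ζ) ^ (-M)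
      ≤ #F • (1 + L * (δ / 10) * t) ^ (-M) := by
        refine sum_le_card_nsmul _ _ _ fun ζ hζ => rpow_le_rpow_of_nonpos (by positivity) ?_
          (by linarith)
        have := mul_le_mul_of_nonneg_left (hband ζ hζ).1 hL.le
        linarith
    _ ≤ ((d - 1 : ℕ) : ℝ) * 6 ^ (d - 1) * (1 + t * (δ / 10) / δ) ^ (d - 2)
          * (1 + L * (δ / 10) * t) ^ (-M) := by
        rw [nsmul_eq_mul]; gcongr
    _ ≤ _ := by
        rw [mul_assoc]
        gcongr

theorem sum_one_add_mul_gdist_rpow_neg_le (hd : 2 ≤ d) {M : ℝ} (hM : (d : ℝ) - 1 < M)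
    {δ L : ℝ} (hδ : 0 < δ) (hL : 0 < L) {Z : Finset (𝕊 d)}
    (hZ : (Z : Set (𝕊 d)).Pairwise (δ ≤ gdist · ·)) (ξ : 𝕊 d) :
    ∑ ζ ∈ Z, (1 + L * gdist ξ ζ) ^ (-M)
      ≤ ((d - 1 : ℕ) : ℝ) * 60 ^ (d - 1) * (1 + 1 / (M - (d - 1)))
        * (1 + 1 / (L * δ)) ^ (d - 1) := by
  have hM0 : 0 ≤ M := by linarith [show (2 : ℝ) ≤ d by exact_mod_cast hd]
  set C₁ : ℝ := ((d - 1 : ℕ) : ℝ) * 6 ^ (d - 1)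
  set N := ⌊π / (δ / 10)⌋₊ + 1
  have hmaps : ∀ ζ ∈ Z, ⌊gdist ξ ζ / (δ / 10)⌋₊ ∈ range N := fun ζ _ =>
    mem_range.2 (Nat.lt_succ_of_le (Nat.floor_le_floor (by gcongr; exact gdist_le_pi ξ ζ)))
  have hp : ((d - 2 : ℕ) : ℝ) + 1 = d - 1 := by
    rw [Nat.cast_sub hd]; push_cast; ring
  have hLδ : 1 + 1 / (L * (δ / 10)) ≤ 10 * (1 + 1 / (L * δ)) := by
    rw [show 1 / (L * (δ / 10)) = 10 * (1 / (L * δ)) by field_simp]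
    linarith
  calc ∑ ζ ∈ Z, (1 + L * gdist ξ ζ) ^ (-M)
      = ∑ t ∈ range N, ∑ ζ ∈ Z with ⌊gdist ξ ζ / (δ / 10)⌋₊ = t, (1 + L * gdist ξ ζ) ^ (-M) :=
        (sum_fiberwise_of_maps_to hmaps _).symm
    _ ≤ C₁ * ∑ t ∈ range N, ((t : ℝ) + 1) ^ (d - 2) * (1 + L * (δ / 10) * t) ^ (-M) := by
        rw [mul_sum]
        exact sum_le_sum fun t _ => sum_filter_floor_eq_rpow_neg_le hd hM0 hδ hL hZ ξ t
    _ ≤ C₁ * ((1 + 1 / (M - (d - 2 : ℕ) - 1)) * (1 + 1 / (L * (δ / 10))) ^ (d - 2 + 1)) := by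
        gcongr
        exact sum_range_pow_mul_rpow_neg_le (by positivity) (by linarith) _
    _ ≤ C₁ * ((1 + 1 / (M - (d - 1))) * (10 * (1 + 1 / (L * δ))) ^ (d - 1)) := by
        rw [sub_sub, hp, show d - 2 + 1 = d - 1 by omega]
        gcongr
    _ = _ := by
        rw [mul_pow, show (60 : ℝ) = 6 * 10 by norm_num, mul_pow]
        ring

theorem sum_weight_le_of_separated (hd : 2 ≤ d) {M : ℝ} (hM : (d : ℝ) - 1 < M) {γ A B : ℝ}
    (hγ : 0 < γ) (hA : 0 < A) (hB : 0 < B) {Z : Finset (𝕊 d)}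
    (hZ : (Z : Set (𝕊 d)).Pairwise (γ / B ≤ gdist · ·)) (ξ : 𝕊 d) (K : ℝ) :
    ∑ ζ ∈ Z, (min A B / max A B) ^ (K + ((d : ℝ) - 1) / 2) * (1 + min A B * gdist ξ ζ) ^ (-M)
      ≤ ((d - 1 : ℕ) : ℝ) * 60 ^ (d - 1) * (1 + 1 / (M - (d - 1))) * (1 + 1 / γ) ^ (d - 1)
        * (min A B / max A B) ^ (K - ((d : ℝ) - 1) / 2) := by
  set r := min A B / max A B
  set C₀ := ((d - 1 : ℕ) : ℝ) * 60 ^ (d - 1) * (1 + 1 / (M - (d - 1)))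
  have hC₀ : 0 ≤ C₀ := by
    have := sub_pos.2 hM
    positivity
  have hm : 0 < min A B := lt_min hA hB
  have hr0 : 0 < r := div_pos hm (hm.trans_le min_le_max)
  have hr1 : r ≤ 1 := div_le_one_of_le₀ min_le_max (hm.le.trans min_le_max)
  have hγr : γ * r ≤ min A B * (γ / B) := by
    rw [mul_div_assoc', mul_comm γ, mul_div_assoc']
    gcongr
    exact le_max_right A B
  have hcast : K + ((d : ℝ) - 1) / 2 - ((d - 1 : ℕ) : ℝ) = K - ((d : ℝ) - 1) / 2 := by
    rw [Nat.cast_sub (by omega)]; push_cast; ring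
  rw [← mul_sum, ← hcast]
  calc r ^ (K + ((d : ℝ) - 1) / 2) * ∑ ζ ∈ Z, (1 + min A B * gdist ξ ζ) ^ (-M)
      ≤ r ^ (K + ((d : ℝ) - 1) / 2) * (C₀ * (1 + 1 / (γ * r)) ^ (d - 1)) := by
        gcongr
        refine (sum_one_add_mul_gdist_rpow_neg_le hd hM (by positivity) hm hZ ξ).trans ?_
        gcongr
    _ = C₀ * (r ^ (K + ((d : ℝ) - 1) / 2) * (1 + 1 / (γ * r)) ^ (d - 1)) := by ring
    _ ≤ C₀ * ((1 + 1 / γ) ^ (d - 1) * r ^ (K + ((d : ℝ) - 1) / 2 - ((d - 1 : ℕ) : ℝ))) := by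
        exact mul_le_mul_of_nonneg_left (rpow_mul_one_add_inv_pow_le hr0 hr1 hγ _ _) hC₀
    _ = _ := by ring

end Sphere

/-- Almost diagonal matrix row sums: for `K > (d-1)/2`, `M > d-1`, with
`N_ξ = b^j` for `ξ ∈ X_j` and
`ω_{ξ,ζ} = (min(N_ξ,N_ζ)/max(N_ξ,N_ζ))^{K+(d-1)/2} (1 + min(N_ξ,N_ζ) ρ(ξ,ζ))^{-M}`,
one has `sup_ξ ∑_{ζ ∈ X} ω_{ξ,ζ} ≤ c` with `c = c(d,γ,b,K,M)`. -/
theorem almost_diagonal_row_sum (d : ℕ) (hd : 2 ≤ d) (b γ K M : ℝ)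
    (hb : 1 < b) (hγ : 0 < γ)
    (hK : ((d : ℝ) - 1) / 2 < K) (hM : (d : ℝ) - 1 < M) :
    ∃ c : ℝ, 0 < c ∧
      ∀ X : ℕ → Finset (Metric.sphere (0 : EuclideanSpace ℝ (Fin d)) 1),
        (∀ n, IsMaximalNet (γ / b ^ n) (X n)) →
        ∀ j : ℕ, ∀ ξ ∈ X j,
          Summable (fun n : ℕ => ∑ ζ ∈ X n,
            (min (b ^ j) (b ^ n) / max (b ^ j) (b ^ n)) ^ (K + ((d : ℝ) - 1) / 2) *
              (1 + min (b ^ j) (b ^ n) * gdist ξ ζ) ^ (-M)) ∧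
          ∑' n : ℕ, (∑ ζ ∈ X n,
            (min (b ^ j) (b ^ n) / max (b ^ j) (b ^ n)) ^ (K + ((d : ℝ) - 1) / 2) *
              (1 + min (b ^ j) (b ^ n) * gdist ξ ζ) ^ (-M)) ≤ c := by
  have hb0 : 0 < b := by linarith
  set β := K - ((d : ℝ) - 1) / 2
  set q := (b ^ β)⁻¹
  have hq0 : 0 ≤ q := by positivity
  have hq1 : q < 1 := inv_lt_one_of_one_lt₀ (one_lt_rpow hb (sub_pos.2 hK))
  set C := ((d - 1 : ℕ) : ℝ) * 60 ^ (d - 1) * (1 + 1 / (M - (d - 1))) * (1 + 1 / γ) ^ (d - 1)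
  have hC : 0 < C := by
    have : (0 : ℝ) < (d - 1 : ℕ) := by exact_mod_cast (by omega : 0 < d - 1)
    have := sub_pos.2 hM
    positivity
  refine ⟨C * (2 / (1 - q)), by have := sub_pos.2 hq1; positivity, fun X hX j ξ _ => ?_⟩
  have hterm (n : ℕ) : ∑ ζ ∈ X n,
      (min (b ^ j) (b ^ n) / max (b ^ j) (b ^ n)) ^ (K + ((d : ℝ) - 1) / 2) *
        (1 + min (b ^ j) (b ^ n) * gdist ξ ζ) ^ (-M) ≤ C * q ^ (max j n - min j n) := by
    rw [← min_pow_div_max_pow_rpow hb.le]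
    exact sum_weight_le_of_separated hd hM hγ (pow_pos hb0 j) (pow_pos hb0 n) (hX n).1 ξ K
  obtain ⟨hs, hsum⟩ := summable_pow_dist_and_tsum_le hq0 hq1 j
  have hS := (hs.mul_left C).of_nonneg_of_le (fun n => sum_nonneg fun ζ _ =>
    mul_nonneg (by positivity) (rpow_nonneg (add_nonneg zero_le_one
      (mul_nonneg (by positivity) (gdist_nonneg ξ ζ))) _)) hterm
  refine ⟨hS, (hS.tsum_le_tsum hterm (hs.mul_left C)).trans ?_⟩
  rw [tsum_mul_left]
  gcongr
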